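/- arXiv:1710.07178 — 2 statements merged into one kernel-verified Lean document; each statement's English description precedes it below -/
import Mathlib

section
/- The (n+1)-extent of the closed unit ball in ℝⁿ equals √(2(n+1)/n); that is, the maximum over (n+1)-tuples of points in the closed unit ball of the average of the pairwise Euclidean distances (with binomial(n+1,2) pairs) equals √(2(n+1)/n). -/
/-!
For points `P₀, …, P_{q-1}` of the unit ball of a real inner product space,
`∑_{i,j} ‖Pᵢ - Pⱼ‖² = 2q ∑ᵢ ‖Pᵢ‖² - 2‖∑ᵢ Pᵢ‖² ≤ 2q²`, so the squares of the `q.choose 2`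
distances sum to at most `q²`, and Cauchy–Schwarz bounds the average distance by
`q / √(q.choose 2) = √(2q/(q-1))`.

The bound is attained by a regular simplex: for the standard basis `eᵢ` of `ℝ^q`, the points
`eᵢ - q⁻¹ ∑ⱼ eⱼ` have norm `√(1 - q⁻¹)` and mutual distances `√2`, and they lie in the hyperplane
orthogonal to `∑ⱼ eⱼ`, which is isometric to `ℝ^(q-1)`.
-/

open Finset
open scoped RealInnerProductSpace

/-- Sum of pairwise distances over the `q.choose 2` pairs `i < j`. -/
noncomputable def pairSum {q : ℕ} {X : Type*} [PseudoMetricSpace X] (z : Fin q → X) : ℝ :=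
  ∑ i : Fin q, ∑ j ∈ Finset.univ.filter (fun j => i < j), dist (z i) (z j)

section Pairs

variable {ι M : Type*} [Fintype ι] [LinearOrder ι] [AddCommMonoid M]

theorem sum_sum_filter_lt_eq_sum_product (f : ι → ι → M) :
    ∑ i, ∑ j with i < j, f i j = ∑ x ∈ univ ×ˢ univ with x.1 < x.2, f x.1 x.2 := by
  rw [sum_filter, sum_product]
  simp only [sum_filter]

theorem sum_sum_eq_two_nsmul_sum_sum_lt {f : ι → ι → M} (hsymm : ∀ i j, f i j = f j i)
    (hdiag : ∀ i, f i i = 0) :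
    ∑ i, ∑ j, f i j = 2 • ∑ i, ∑ j with i < j, f i j := by
  have hsplit : ∀ i j, f i j = (if i < j then f i j else 0) + (if j < i then f j i else 0) := by
    intro i j
    rcases lt_trichotomy i j with h | rfl | h
    · simp [h, h.not_gt]
    · simp [hdiag]
    · simp [h, h.not_gt, hsymm i j]
  simp_rw [sum_filter, two_nsmul]
  conv_lhs => enter [2, i, 2, j]; rw [hsplit i j]
  simp only [sum_add_distrib]
  rw [sum_comm (f := fun i j => if j < i then f j i else 0)]

end Pairs

theorem pairSum_eq_choose_two_mul {q : ℕ} {X : Type*} [PseudoMetricSpace X] {z : Fin q → X} {d : ℝ}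
    (hz : ∀ i j, i ≠ j → dist (z i) (z j) = d) : pairSum z = q.choose 2 * d := by
  rw [pairSum, sum_sum_filter_lt_eq_sum_product,
    sum_congr rfl fun x hx => hz x.1 x.2 (mem_filter.1 hx).2.ne, sum_const,
    card_product_filter_lt, card_univ, Fintype.card_fin, nsmul_eq_mul]

section InnerProductSpace

variable {E : Type*} [NormedAddCommGroup E] [InnerProductSpace ℝ E]

theorem sum_sum_norm_sub_sq {ι : Type*} [Fintype ι] (P : ι → E) :
    ∑ i, ∑ j, ‖P i - P j‖ ^ 2 = 2 * (Fintype.card ι * ∑ i, ‖P i‖ ^ 2) - 2 * ‖∑ i, P i‖ ^ 2 := by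
  simp_rw [norm_sub_sq_real]
  simp only [sum_add_distrib, sum_sub_distrib, sum_const, card_univ, nsmul_eq_mul, ← mul_sum,
    ← inner_sum, ← sum_inner, real_inner_self_eq_norm_sq]
  ring

theorem sum_sum_norm_sub_sq_le {ι : Type*} [Fintype ι] {P : ι → E} (hP : ∀ i, ‖P i‖ ≤ 1) :
    ∑ i, ∑ j, ‖P i - P j‖ ^ 2 ≤ 2 * Fintype.card ι ^ 2 := by
  have hsq : ∑ i, ‖P i‖ ^ 2 ≤ Fintype.card ι := by
    calc ∑ i, ‖P i‖ ^ 2 ≤ ∑ _i : ι, (1 : ℝ) :=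
          sum_le_sum fun i _ => pow_le_one₀ (norm_nonneg _) (hP i)
      _ = Fintype.card ι := by simp
  rw [sum_sum_norm_sub_sq]
  nlinarith [sq_nonneg ‖∑ i, P i‖]

theorem pairSum_sq_le {q : ℕ} {P : Fin q → E} (hP : ∀ i, ‖P i‖ ≤ 1) :
    pairSum P ^ 2 ≤ q.choose 2 * q ^ 2 := by
  have hcs : pairSum P ^ 2 ≤ q.choose 2 * ∑ i, ∑ j with i < j, dist (P i) (P j) ^ 2 := by
    rw [pairSum, sum_sum_filter_lt_eq_sum_product, sum_sum_filter_lt_eq_sum_product]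
    have := sq_sum_le_card_mul_sum_sq
      (s := {x ∈ univ ×ˢ univ | x.1 < x.2}) (f := fun x : Fin q × Fin q => dist (P x.1) (P x.2))
    rwa [card_product_filter_lt, card_univ, Fintype.card_fin] at this
  have hhalf : 2 * ∑ i, ∑ j with i < j, dist (P i) (P j) ^ 2 ≤ 2 * q ^ 2 := by
    have hdouble := sum_sum_eq_two_nsmul_sum_sum_lt (f := fun i j => dist (P i) (P j) ^ 2)
      (fun i j => by rw [dist_comm]) (by simp)
    rw [nsmul_eq_mul, Nat.cast_ofNat] at hdouble
    rw [← hdouble]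
    simpa [dist_eq_norm] using sum_sum_norm_sub_sq_le hP
  nlinarith [Nat.cast_nonneg (α := ℝ) (q.choose 2)]

theorem choose_two_inv_mul_pairSum_le {q : ℕ} {P : Fin q → E} (hP : ∀ i, ‖P i‖ ≤ 1) :
    (q.choose 2 : ℝ)⁻¹ * pairSum P ≤ √(2 * q / (q - 1)) := by
  have hchoose : (q.choose 2 : ℝ) = q * (q - 1) / 2 := Nat.cast_choose_two ℝ q
  apply Real.le_sqrt_of_sq_le
  calc ((q.choose 2 : ℝ)⁻¹ * pairSum P) ^ 2 = pairSum P ^ 2 / (q.choose 2 : ℝ) ^ 2 := by ring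
    _ ≤ q.choose 2 * q ^ 2 / (q.choose 2 : ℝ) ^ 2 := by gcongr; exact pairSum_sq_le hP
    _ = 2 * q / (q - 1) := by rw [hchoose]; field_simp

end InnerProductSpace

section Orthonormal

variable {E ι : Type*} [NormedAddCommGroup E] [InnerProductSpace ℝ E] {e : ι → E}

theorem Orthonormal.norm_sub_of_ne (he : Orthonormal ℝ e) {i j : ι} (hij : i ≠ j) :
    ‖e i - e j‖ = √2 := by
  rw [← Real.sqrt_sq (norm_nonneg _), norm_sub_sq_real, he.inner_eq_zero hij, he.norm_eq_one,
    he.norm_eq_one]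
  norm_num

variable [Fintype ι]

theorem Orthonormal.inner_sum_right (he : Orthonormal ℝ e) (i : ι) : ⟪e i, ∑ j, e j⟫ = 1 := by
  simpa using he.inner_right_fintype (fun _ => 1) i

theorem Orthonormal.norm_sum_sq (he : Orthonormal ℝ e) : ‖∑ i, e i‖ ^ 2 = Fintype.card ι := by
  rw [← real_inner_self_eq_norm_sq, sum_inner]
  simp [he.inner_sum_right]

theorem Orthonormal.inner_sub_centroid_sum (he : Orthonormal ℝ e) (i : ι) :
    ⟪e i - (Fintype.card ι : ℝ)⁻¹ • ∑ j, e j, ∑ j, e j⟫ = 0 := by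
  rw [inner_sub_left, inner_smul_left, real_inner_self_eq_norm_sq, he.norm_sum_sq,
    he.inner_sum_right]
  have hcard : (Fintype.card ι : ℝ) ≠ 0 := by exact_mod_cast (Fintype.card_pos_iff.2 ⟨i⟩).ne'
  simp [hcard]

theorem Orthonormal.norm_sub_centroid (he : Orthonormal ℝ e) (i : ι) :
    ‖e i - (Fintype.card ι : ℝ)⁻¹ • ∑ j, e j‖ = √(1 - (Fintype.card ι : ℝ)⁻¹) := by
  have hcard : (Fintype.card ι : ℝ) ≠ 0 := by exact_mod_cast (Fintype.card_pos_iff.2 ⟨i⟩).ne'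
  rw [← Real.sqrt_sq (norm_nonneg _), norm_sub_sq_real, inner_smul_right, he.inner_sum_right,
    norm_smul, mul_pow, Real.norm_eq_abs, sq_abs, he.norm_sum_sq, he.norm_eq_one]
  congr 1
  field_simp
  ring

end Orthonormal

theorem exists_regular_simplex (n : ℕ) (hn : 0 < n) :
    ∃ P : Fin (n + 1) → EuclideanSpace ℝ (Fin n),
      (∀ i, ‖P i‖ = 1) ∧ ∀ i j, i ≠ j → dist (P i) (P j) = √(2 * (n + 1) / n) := by
  have he := (EuclideanSpace.basisFun (Fin (n + 1)) ℝ).orthonormal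
  set e := ⇑(EuclideanSpace.basisFun (Fin (n + 1)) ℝ)
  set s := ∑ j, e j
  have hs : s ≠ 0 := fun h => by simpa [s, h] using he.inner_sum_right 0
  have : Fact (Module.finrank ℝ (EuclideanSpace ℝ (Fin (n + 1))) = n + 1) :=
    ⟨finrank_euclideanSpace_fin⟩
  let B := OrthonormalBasis.fromOrthogonalSpanSingleton (𝕜 := ℝ) n hs
  set r := √((n + 1) / n)
  have hcard : (Fintype.card (Fin (n + 1)) : ℝ) = n + 1 := by simp
  have hmem : ∀ i, r • (e i - ((n : ℝ) + 1)⁻¹ • s) ∈ (ℝ ∙ s)ᗮ := fun i =>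
    Submodule.smul_mem _ _ (Submodule.mem_orthogonal_singleton_iff_inner_left.2
      (by simpa [hcard] using he.inner_sub_centroid_sum i))
  refine ⟨fun i => B.repr ⟨_, hmem i⟩, fun i => ?_, fun i j hij => ?_⟩
  · rw [B.repr.norm_map, Submodule.coe_norm, norm_smul, Real.norm_of_nonneg (Real.sqrt_nonneg _),
      ← hcard, he.norm_sub_centroid, ← Real.sqrt_mul (by positivity), hcard]
    field_simp
    simp [hn.ne']
  · rw [B.repr.dist_map, Subtype.dist_eq, dist_eq_norm, ← smul_sub, sub_sub_sub_cancel_right,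
      norm_smul, Real.norm_of_nonneg (Real.sqrt_nonneg _), he.norm_sub_of_ne hij,
      ← Real.sqrt_mul (by positivity)]
    ring_nf

/-- The `(n+1)`-extent of the closed unit ball of `ℝⁿ` equals `√(2(n+1)/n)`:
the value `√(2(n+1)/n)` is the greatest element of the set of averages
`(binomial(n+1,2))⁻¹ Σ_{i<j} |P_i - P_j|` over `(n+1)`-tuples in the closed unit ball. -/
theorem extent_unit_ball (n : ℕ) (hn : 1 ≤ n) :
    IsGreatest
      {s : ℝ | ∃ P : Fin (n + 1) → EuclideanSpace ℝ (Fin n),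
          (∀ k, ‖P k‖ ≤ 1) ∧ s = ((n + 1).choose 2 : ℝ)⁻¹ * pairSum P}
      (Real.sqrt (2 * (n + 1) / n)) := by
  have hvalue : (2 * ((n + 1 : ℕ) : ℝ) / ((n + 1 : ℕ) - 1)) = 2 * (n + 1) / n := by
    push_cast; ring_nf
  constructor
  · obtain ⟨P, hnorm, hdist⟩ := exists_regular_simplex n hn
    have hpos : (0 : ℝ) < (n + 1).choose 2 := by exact_mod_cast Nat.choose_pos (by omega)
    refine ⟨P, fun k => (hnorm k).le, ?_⟩
    rw [pairSum_eq_choose_two_mul hdist, inv_mul_cancel_left₀ hpos.ne']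
  · rintro s ⟨P, hP, rfl⟩
    simpa [hvalue] using choose_two_inv_mul_pairSum_le hP
end

section
/- Let R be an algebraic curvature tensor on ℝⁿ (a 4-linear map with the symmetries R(X,Y,Z,W) = −R(Y,X,Z,W) = R(Z,W,X,Y) and the first Bianchi identity), and let S₁,…,S_{n+1} be the vertices of a regular simplex inscribed in the unit sphere of ℝⁿ. Then Σ_{1≤k<j≤n+1} R(S_k, S_j, S_j, S_k) = ((n+1)²/(2n²)) · Scal, where Scal = Σ_{i,j} R(e_i, e_j, e_j, e_i) for any orthonormal basis (e_i). -/
/-!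
The vertices `Sₖ` of a regular simplex form a tight frame: `∑ₖ ⟪Sₖ, x⟫ Sₖ = μ x` with
`μ = (n+1)/n`. For any finite family `v` in an `n`-dimensional space with frame operator `F`,
the squared Hilbert–Schmidt norm `∑ᵢ ‖(F - μ) eᵢ‖²` equals
`∑ₖⱼ ⟪vₖ, vⱼ⟫² - 2μ ∑ₖ ‖vₖ‖² + μ² n`, and for the simplex this is
`(n+1)²/n - 2(n+1)²/n + (n+1)²/n = 0`.

For a tight frame the trace of a bilinear form may be computed over the frame instead of an
orthonormal basis, at the cost of the factor `μ`. Doing this in the inner and in the outer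
slots of `R` gives `∑ₖⱼ R(Sₖ,Sⱼ,Sⱼ,Sₖ) = μ² Scal`, and the sum over `k < j` is half of that
because the summand is symmetric in `k, j` and vanishes for `k = j`.
-/

open Finset
open scoped InnerProductSpace

/-- An algebraic curvature tensor on a real vector space: a 4-linear map (linearity is
required in the first slot; together with the symmetries this gives full multilinearity)
which is antisymmetric in the first two and in the last two slots, symmetric under exchange
of the two pairs, and satisfies the first Bianchi identity. -/
structure CurvTensor (E : Type*) [AddCommGroup E] [Module ℝ E] where
  R : E → E → E → E → ℝ
  add_left : ∀ x x' y z w, R (x + x') y z w = R x y z w + R x' y z w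
  smul_left : ∀ (c : ℝ) x y z w, R (c • x) y z w = c * R x y z w
  antisym_fst : ∀ x y z w, R x y z w = -R y x z w
  antisym_snd : ∀ x y z w, R x y z w = -R x y w z
  pair_symm : ∀ x y z w, R x y z w = R z w x y
  bianchi : ∀ x y z w, R x y z w + R y z x w + R z x y w = 0

namespace CurvTensor

variable {E : Type*} [AddCommGroup E] [Module ℝ E] (T : CurvTensor E)

theorem add_last (x y z w w' : E) : T.R x y z (w + w') = T.R x y z w + T.R x y z w' := by
  rw [T.pair_symm x y z, T.pair_symm x y z, T.pair_symm x y z, T.antisym_fst z, T.antisym_fst z,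
    T.antisym_fst z, T.add_left]
  ring

theorem smul_last (c : ℝ) (x y z w : E) : T.R x y z (c • w) = c * T.R x y z w := by
  rw [T.pair_symm x y z, T.pair_symm x y z, T.antisym_fst z, T.antisym_fst z, T.smul_left]
  ring

theorem R_self_eq_zero (x z w : E) : T.R x x z w = 0 := by
  linarith [T.antisym_fst x x z w]

def outerBilin (y z : E) : E →ₗ[ℝ] E →ₗ[ℝ] ℝ :=
  LinearMap.mk₂ ℝ (fun x w => T.R x y z w) (fun x x' w => T.add_left x x' y z w)
    (fun c x w => T.smul_left c x y z w) (fun x w w' => T.add_last x y z w w')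
    (fun c x w => T.smul_last c x y z w)

@[simp]
theorem outerBilin_apply (x y z w : E) : T.outerBilin y z x w = T.R x y z w := rfl

end CurvTensor

section Frame

variable {E ι κ : Type*} [NormedAddCommGroup E] [InnerProductSpace ℝ E] [Fintype ι] [Fintype κ]

noncomputable def frameOperator (v : κ → E) : E →ₗ[ℝ] E :=
  ∑ k, (innerₛₗ ℝ (v k)).smulRight (v k)

theorem frameOperator_apply (v : κ → E) (x : E) :
    frameOperator v x = ∑ k, ⟪v k, x⟫_ℝ • v k := by
  simp [frameOperator]

theorem norm_frameOperator_sub_smul_sq (v : κ → E) (μ : ℝ) (x : E) :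
    ‖frameOperator v x - μ • x‖ ^ 2 =
      ∑ k, ∑ j, ⟪v k, x⟫_ℝ * ⟪v j, x⟫_ℝ * ⟪v k, v j⟫_ℝ - 2 * μ * ∑ k, ⟪v k, x⟫_ℝ ^ 2
        + μ ^ 2 * ‖x‖ ^ 2 := by
  rw [norm_sub_sq_real, frameOperator_apply, ← real_inner_self_eq_norm_sq]
  simp only [sum_inner, inner_sum, real_inner_smul_left, real_inner_smul_right, norm_smul,
    real_inner_comm x]
  rw [mul_pow, Real.norm_eq_abs, sq_abs]
  simp only [mul_sum, sq, real_inner_comm (v _) (v _)]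
  ring_nf

theorem frameOperator_eq_smul_id_of_frame_potential [FiniteDimensional ℝ E] (v : κ → E) (μ : ℝ)
    (hnorm : ∑ k, ‖v k‖ ^ 2 = μ * Module.finrank ℝ E)
    (hpot : ∑ k, ∑ j, ⟪v k, v j⟫_ℝ ^ 2 = μ ^ 2 * Module.finrank ℝ E) :
    frameOperator v = μ • LinearMap.id := by
  set b := stdOrthonormalBasis ℝ E
  have hpot' : ∑ i, ∑ k, ∑ j, ⟪v k, b i⟫_ℝ * ⟪v j, b i⟫_ℝ * ⟪v k, v j⟫_ℝ =
      ∑ k, ∑ j, ⟪v k, v j⟫_ℝ ^ 2 := by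
    rw [sum_comm]
    refine sum_congr rfl fun k _ => ?_
    rw [sum_comm]
    refine sum_congr rfl fun j _ => ?_
    simp_rw [← sum_mul, ← real_inner_comm (v j) (b _), b.sum_inner_mul_inner, sq]
  have hnorm' : ∑ i, ∑ k, ⟪v k, b i⟫_ℝ ^ 2 = ∑ k, ‖v k‖ ^ 2 := by
    rw [sum_comm]
    simp_rw [b.sum_sq_inner_left]
  have hzero : ∑ i, ‖frameOperator v (b i) - μ • b i‖ ^ 2 = 0 := by
    simp only [norm_frameOperator_sub_smul_sq, sum_add_distrib, sum_sub_distrib, ← mul_sum,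
      hpot', hnorm', b.orthonormal.1, hnorm, hpot, one_pow, sum_const, card_univ,
      Fintype.card_fin, nsmul_eq_mul, mul_one]
    ring
  refine b.toBasis.ext fun i => ?_
  have := (sum_eq_zero_iff_of_nonneg fun i _ => by positivity).1 hzero i (mem_univ i)
  simpa [sub_eq_zero] using this

theorem sum_bilin_frame_eq_mul_sum_bilin_basis {v : κ → E} {μ : ℝ}
    (hv : frameOperator v = μ • LinearMap.id) (b : OrthonormalBasis ι ℝ E) (B : E →ₗ[ℝ] E →ₗ[ℝ] ℝ) :
    ∑ k, B (v k) (v k) = μ * ∑ i, B (b i) (b i) := by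
  calc ∑ k, B (v k) (v k)
      = ∑ k, B (v k) (∑ i, ⟪b i, v k⟫_ℝ • b i) := by simp_rw [b.sum_repr']
    _ = ∑ i, B (frameOperator v (b i)) (b i) := by
        simp_rw [frameOperator_apply, map_sum, map_smul, LinearMap.sum_apply,
          LinearMap.smul_apply, real_inner_comm (b _)]
        exact sum_comm
    _ = μ * ∑ i, B (b i) (b i) := by simp [hv, mul_sum]

theorem frameOperator_eq_smul_id_of_regular_simplex [FiniteDimensional ℝ E] {n : ℕ} (hn : n ≠ 0)
    (hE : Module.finrank ℝ E = n) (S : Fin (n + 1) → E) (hnorm : ∀ k, ‖S k‖ = 1)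
    (hinner : ∀ k j, k ≠ j → ⟪S k, S j⟫_ℝ = -1 / n) :
    frameOperator S = (((n : ℝ) + 1) / n) • LinearMap.id := by
  have hn' : (n : ℝ) ≠ 0 := Nat.cast_ne_zero.2 hn
  have hgram (k j) :
      ⟪S k, S j⟫_ℝ ^ 2 = 1 / (n : ℝ) ^ 2 + if k = j then 1 - 1 / (n : ℝ) ^ 2 else 0 := by
    by_cases h : k = j
    · simp [h, hnorm]
    · simp [h, hinner k j h, div_pow]
  apply frameOperator_eq_smul_id_of_frame_potential
  · simp only [hnorm, one_pow, sum_const, card_univ, Fintype.card_fin, nsmul_eq_mul,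
      Nat.cast_add, Nat.cast_one, mul_one, hE]
    field_simp
  · simp only [hgram, one_div, sum_add_distrib, sum_const, card_univ, Fintype.card_fin,
      nsmul_eq_mul, Nat.cast_add, Nat.cast_one, sum_ite_eq, mem_univ, ↓reduceIte, hE]
    field_simp
    ring

theorem CurvTensor.sum_sum_frame_eq_sq_mul_sum_sum_basis (T : CurvTensor E) {v : κ → E} {μ : ℝ}
    (hv : frameOperator v = μ • LinearMap.id) (b : OrthonormalBasis ι ℝ E) :
    ∑ k, ∑ j, T.R (v k) (v j) (v j) (v k) = μ ^ 2 * ∑ i, ∑ j, T.R (b i) (b j) (b j) (b i) := by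
  have hout (y z : E) : ∑ k, T.R (v k) y z (v k) = μ * ∑ i, T.R (b i) y z (b i) :=
    sum_bilin_frame_eq_mul_sum_bilin_basis hv b (T.outerBilin y z)
  have hmid (x w : E) : ∑ k, T.R x (v k) (v k) w = μ * ∑ i, T.R x (b i) (b i) w := by
    simp_rw [T.pair_symm x]
    exact hout w x
  calc ∑ k, ∑ j, T.R (v k) (v j) (v j) (v k)
      = μ * ∑ i, ∑ k, T.R (v k) (b i) (b i) (v k) := by
        simp_rw [hmid, ← mul_sum]
        rw [sum_comm]
    _ = μ ^ 2 * ∑ i, ∑ j, T.R (b i) (b j) (b j) (b i) := by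
        simp_rw [hout, ← mul_sum]
        rw [sum_comm]
        ring

end Frame

theorem Finset.sum_sum_eq_two_nsmul_sum_sum_filter_lt {ι M : Type*} [Fintype ι] [LinearOrder ι]
    [AddCommMonoid M] (f : ι → ι → M) (hsymm : ∀ i j, f i j = f j i) (hdiag : ∀ i, f i i = 0) :
    ∑ i, ∑ j, f i j = 2 • ∑ i, ∑ j ∈ univ.filter (i < ·), f i j := by
  have hsplit (i j : ι) : f i j = (if i < j then f i j else 0) + (if j < i then f j i else 0) := by
    rcases lt_trichotomy i j with h | rfl | h
    · simp [h, h.not_gt]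
    · simp [hdiag]
    · simp [h, h.not_gt, hsymm i j]
  calc ∑ i, ∑ j, f i j
      = ∑ i, ∑ j, ((if i < j then f i j else 0) + (if j < i then f j i else 0)) :=
        sum_congr rfl fun i _ => sum_congr rfl fun j _ => hsplit i j
    _ = 2 • ∑ i, ∑ j ∈ univ.filter (i < ·), f i j := by
        simp only [sum_add_distrib]
        rw [sum_comm (f := fun i j => if j < i then f j i else 0), two_nsmul]
        simp only [sum_filter]

/-- Averaging an algebraic curvature tensor over the vertices of a regular simplex inscribed
in the unit sphere of `ℝⁿ` recovers the scalar curvature: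
`Σ_{k<j} R(S_k,S_j,S_j,S_k) = ((n+1)²/(2n²))·Scal`, where
`Scal = Σ_{i,j} R(e_i,e_j,e_j,e_i)` for the standard orthonormal basis. -/
theorem regular_simplex_scalar_curvature (n : ℕ) (hn : 2 ≤ n)
    (T : CurvTensor (EuclideanSpace ℝ (Fin n)))
    (S : Fin (n + 1) → EuclideanSpace ℝ (Fin n))
    (hnorm : ∀ k, ‖S k‖ = 1)
    (hinner : ∀ k j, k ≠ j → ⟪S k, S j⟫_ℝ = -1 / n) :
    ∑ k : Fin (n + 1), ∑ j ∈ Finset.univ.filter (fun j => k < j),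
        T.R (S k) (S j) (S j) (S k) =
      ((n + 1 : ℝ) ^ 2 / (2 * n ^ 2)) *
        ∑ i : Fin n, ∑ j : Fin n,
          T.R (EuclideanSpace.single i 1) (EuclideanSpace.single j 1)
            (EuclideanSpace.single j 1) (EuclideanSpace.single i 1) := by
  have hS := frameOperator_eq_smul_id_of_regular_simplex (by omega) finrank_euclideanSpace_fin S
    hnorm hinner
  have hfull := T.sum_sum_frame_eq_sq_mul_sum_sum_basis hS (EuclideanSpace.basisFun (Fin n) ℝ)
  have hhalf := sum_sum_eq_two_nsmul_sum_sum_filter_lt (fun k j => T.R (S k) (S j) (S j) (S k))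
    (fun k j => T.pair_symm _ _ _ _) (fun k => T.R_self_eq_zero _ _ _)
  simp only [EuclideanSpace.basisFun_apply] at hfull
  rw [hfull, two_nsmul] at hhalf
  linear_combination -hhalf / 2
end
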